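/- (Theorem 2, score rescaling, general linear-Gaussian form) Let μ₀, b ∈ ℝ^d, let A be a d×d real matrix, let Σ₀ and Σ_t be symmetric positive definite d×d real matrices, and let β > 0. Define p_t(x) = N(x; A μ₀ + b, Σ_t + A Σ₀ Aᵀ) (the marginal of the perturbation kernel N(A x₀ + b, Σ_t) applied to the data distribution N(μ₀, Σ₀)) and p_t^{(β)}(x) = N(x; A μ₀ + b, Σ_t + β⁻¹ A Σ₀ Aᵀ) (the marginal obtained from the β-tempered data distribution N(μ₀, β⁻¹ Σ₀)). Then for every x ∈ ℝ^d, ∇_x log p_t^{(β)}(x) = R ∇_x log p_t(x), where R = (Σ_t + β⁻¹ A Σ₀ Aᵀ)⁻¹ (Σ_t + A Σ₀ Aᵀ). -/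

import Mathlib

/-! The score of `N(μ, S)` is `x ↦ -S⁻¹ (x - μ)`, so the scores of two Gaussians with the same
mean differ by the fixed matrix `S₂⁻¹ S₁`. Tempering only rescales the positive semidefinite term
`A Σ₀ Aᵀ`, so both covariances stay positive definite. -/

open scoped RealInnerProductSpace Matrix

/-- The multivariate Gaussian density `N(x; μ, S)` on `ℝ^d`. -/
noncomputable def gaussianDensity {d : ℕ} (μ : EuclideanSpace ℝ (Fin d))
    (S : Matrix (Fin d) (Fin d) ℝ) (x : EuclideanSpace ℝ (Fin d)) : ℝ :=
  (2 * Real.pi) ^ (-(d : ℝ) / 2) * S.det ^ (-(1 : ℝ) / 2) *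
    Real.exp (-(1 / 2 : ℝ) * ⟪x - μ, (Matrix.toEuclideanLin S⁻¹) (x - μ)⟫)

theorem log_gaussianDensity {d : ℕ} (μ : EuclideanSpace ℝ (Fin d))
    {S : Matrix (Fin d) (Fin d) ℝ} (hS : S.PosDef) (x : EuclideanSpace ℝ (Fin d)) :
    Real.log (gaussianDensity μ S x) =
      Real.log ((2 * Real.pi) ^ (-(d : ℝ) / 2) * S.det ^ (-(1 : ℝ) / 2)) -
        (1 / 2 : ℝ) * ⟪x - μ, (Matrix.toEuclideanLin S⁻¹) (x - μ)⟫ := by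
  have hc : 0 < (2 * Real.pi) ^ (-(d : ℝ) / 2) * S.det ^ (-(1 : ℝ) / 2) := by
    have := hS.det_pos
    positivity
  rw [gaussianDensity, Real.log_mul hc.ne' (Real.exp_ne_zero _), Real.log_exp]
  ring

theorem hasGradientAt_log_gaussianDensity {d : ℕ} (μ : EuclideanSpace ℝ (Fin d))
    {S : Matrix (Fin d) (Fin d) ℝ} (hS : S.PosDef) (x : EuclideanSpace ℝ (Fin d)) :
    HasGradientAt (fun y => Real.log (gaussianDensity μ S y))
      (-(Matrix.toEuclideanLin S⁻¹) (x - μ)) x := by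
  set T := LinearMap.toContinuousLinearMap (Matrix.toEuclideanLin S⁻¹)
  have hT : (T : EuclideanSpace ℝ (Fin d) →ₗ[ℝ] EuclideanSpace ℝ (Fin d)).IsSymmetric :=
    Matrix.isSymmetric_toEuclideanLin_iff.mpr hS.isHermitian.inv
  have hquad := (hT.hasStrictFDerivAt_reApplyInnerSelf (x - μ)).hasFDerivAt.comp x
    ((hasFDerivAt_id x).sub_const μ)
  have hlog : (fun y => Real.log (gaussianDensity μ S y)) = fun y =>
      Real.log ((2 * Real.pi) ^ (-(d : ℝ) / 2) * S.det ^ (-(1 : ℝ) / 2)) -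
        (1 / 2 : ℝ) * T.reApplyInnerSelf (y - μ) := by
    funext y
    rw [log_gaussianDensity μ hS, T.reApplyInnerSelf_apply, real_inner_comm]
    rfl
  rw [hasGradientAt_iff_hasFDerivAt, hlog]
  refine ((hquad.const_mul _).const_sub _).congr_fderiv ?_
  ext v
  simp [T]

theorem gradient_log_gaussianDensity_eq_toEuclideanLin {d : ℕ} (μ : EuclideanSpace ℝ (Fin d))
    {S₁ S₂ : Matrix (Fin d) (Fin d) ℝ} (h₁ : S₁.PosDef) (h₂ : S₂.PosDef)
    (x : EuclideanSpace ℝ (Fin d)) :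
    gradient (fun y => Real.log (gaussianDensity μ S₂ y)) x =
      Matrix.toEuclideanLin (S₂⁻¹ * S₁)
        (gradient (fun y => Real.log (gaussianDensity μ S₁ y)) x) := by
  rw [(hasGradientAt_log_gaussianDensity μ h₂ x).gradient,
    (hasGradientAt_log_gaussianDensity μ h₁ x).gradient, map_neg,
    ← LinearMap.comp_apply, ← Matrix.toLpLin_mul_same,
    Matrix.mul_nonsing_inv_cancel_right _ _ h₁.det_pos.ne'.isUnit]

theorem Matrix.PosDef.add_smul_mul_mul_transpose {m n : Type*} [Fintype m] [Fintype n]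
    {S : Matrix m m ℝ} (hS : S.PosDef) {S₀ : Matrix n n ℝ} (hS₀ : S₀.PosSemidef)
    (A : Matrix m n ℝ) {c : ℝ} (hc : 0 ≤ c) : (S + c • (A * S₀ * Aᵀ)).PosDef :=
  hS.add_posSemidef ((hS₀.mul_mul_conjTranspose_same A).smul hc)

/-- Theorem 2 (score rescaling, general linear-Gaussian form): with
`p_t = N(A μ₀ + b, Σ_t + A Σ₀ Aᵀ)` and `p_t^{(β)} = N(A μ₀ + b, Σ_t + β⁻¹ A Σ₀ Aᵀ)`,
the tempered score is a linear rescaling of the untempered score: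
`∇ log p_t^{(β)}(x) = R ∇ log p_t(x)` with
`R = (Σ_t + β⁻¹ A Σ₀ Aᵀ)⁻¹ (Σ_t + A Σ₀ Aᵀ)`. -/
theorem score_rescaling {d : ℕ} (μ₀ b : EuclideanSpace ℝ (Fin d))
    (A : Matrix (Fin d) (Fin d) ℝ) (S₀ St : Matrix (Fin d) (Fin d) ℝ)
    (hS₀ : S₀.PosDef) (hSt : St.PosDef) (β : ℝ) (hβ : 0 < β) :
    ∀ x : EuclideanSpace ℝ (Fin d),
      gradient (fun y =>
          Real.log (gaussianDensity ((Matrix.toEuclideanLin A) μ₀ + b)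
            (St + β⁻¹ • (A * S₀ * Aᵀ)) y)) x
        = (Matrix.toEuclideanLin ((St + β⁻¹ • (A * S₀ * Aᵀ))⁻¹ * (St + A * S₀ * Aᵀ)))
            (gradient (fun y =>
              Real.log (gaussianDensity ((Matrix.toEuclideanLin A) μ₀ + b)
                (St + A * S₀ * Aᵀ) y)) x) := by
  intro x
  have hTempered := hSt.add_smul_mul_mul_transpose hS₀.posSemidef A (inv_pos.mpr hβ).le
  have hData := hSt.add_smul_mul_mul_transpose hS₀.posSemidef A zero_le_one
  rw [one_smul] at hData
  exact gradient_log_gaussianDensity_eq_toEuclideanLin _ hData hTempered x
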